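/- arXiv:1404.3368 — 3 statements merged into one kernel-verified Lean document; each statement's English description precedes it below -/
import Mathlib

section
/- Let S = S₊ ∪ S₋ be a finite labeled point set in a metric space with margin γ = dist(S₊, S₋) > 0. If Sγ ⊆ S is a γ-net of S (pairwise distances in Sγ are ≥ γ, and every point of S is strictly within distance γ of some point of Sγ), then Sγ is consistent with S: for every p ∈ S, every nearest neighbor of p in Sγ has the same label as p. -/
/-- If `Sγ` is a `γ`-net of `S = S₊ ∪ S₋` and the margin (minimal distance between
opposite-labeled points) is `γ > 0`, then `Sγ` is consistent with `S`: every nearest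
neighbor in `Sγ` of any point `p ∈ S` has the same label as `p`. -/
theorem stmt_1 {X : Type*} [MetricSpace X] [DecidableEq X] (Sp Sm Sγ : Finset X) (γ : ℝ) (hγ : 0 < γ)
    (hmargin : ∀ x ∈ Sp, ∀ y ∈ Sm, γ ≤ dist x y)
    (hsub : Sγ ⊆ Sp ∪ Sm)
    (hpack : ∀ p ∈ Sγ, ∀ q ∈ Sγ, p ≠ q → γ ≤ dist p q)
    (hcover : ∀ p ∈ Sp ∪ Sm, ∃ q ∈ Sγ, dist p q < γ) :
    ∀ p ∈ Sp ∪ Sm, ∀ q ∈ Sγ, (∀ r ∈ Sγ, dist p q ≤ dist p r) →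
      ((p ∈ Sp → q ∈ Sp) ∧ (p ∈ Sm → q ∈ Sm)) := by
  intro p hp q hq hnear
  obtain ⟨r, hr, hrlt⟩ := hcover p hp
  have hlt : dist p q < γ := lt_of_le_of_lt (hnear r hr) hrlt
  constructor
  · intro hpp
    by_contra hqp
    have hqm : q ∈ Sm := by
      rcases Finset.mem_union.mp (hsub hq) with h | h
      · exact absurd h hqp
      · exact h
    exact absurd hlt (not_lt.mpr (hmargin p hpp q hqm))
  · intro hpm
    by_contra hqm
    have hqp : q ∈ Sp := by
      rcases Finset.mem_union.mp (hsub hq) with h | h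
      · exact h
      · exact absurd h hqm
    have := hmargin q hqp p hpm
    rw [dist_comm] at this
    exact absurd hlt (not_lt.mpr this)
end

section
/- In the twin gadget with D-dimensional grid locations, inclusion of one location's pair forces all locations: let locations x₁,…,x_w be the points of a contiguous ℓ₁-grid piece in ℤ^D of side length ⌈w^{1/D}⌉ (so every location has a grid-neighbor at ℓ₁-distance exactly 1 among the locations whenever w ≥ 2, and the location graph with edges at distance 1 is connected). If a consistent subset contains both twins at some location, then it contains all 2w twin points. -/
/-- Twin gadget over connected grid locations: locations `1..w` have pairwise distances
`d j k ≥ 1`, the location graph with edges at distance exactly `1` is connected, and each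
location `j` carries a positive twin `pp j` and negative twin `pm j` at mutual distance
`γ/2 < 1`, with cross-location distances between twin points equal to `d j k`. If a
consistent subset `T'` contains both twins at some location, then it contains all `2w`
twin points. -/
theorem stmt_18 {X : Type*} [MetricSpace X] (w : ℕ) (γ : ℝ) (hγ : 0 < γ) (hγ1 : γ / 2 < 1)
    (d : Fin w → Fin w → ℝ) (hd1 : ∀ j k, j ≠ k → 1 ≤ d j k)
    (hconn : ∀ j k : Fin w, Relation.ReflTransGen (fun a b => a ≠ b ∧ d a b = 1) j k)
    (pp pm : Fin w → X)
    (htwin : ∀ j, dist (pp j) (pm j) = γ / 2)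
    (hcross : ∀ j k, j ≠ k →
      dist (pp j) (pp k) = d j k ∧ dist (pp j) (pm k) = d j k ∧
      dist (pm j) (pp k) = d j k ∧ dist (pm j) (pm k) = d j k)
    (T' : Finset X)
    (hsub : (T' : Set X) ⊆ Set.range pp ∪ Set.range pm)
    (hcons : ∀ x ∈ Set.range pp ∪ Set.range pm, ∀ q ∈ T',
      (∀ r ∈ T', dist x q ≤ dist x r) → (x ∈ Set.range pp ↔ q ∈ Set.range pp))
    (j : Fin w) (hjp : pp j ∈ T') (hjm : pm j ∈ T') :
    ∀ k, pp k ∈ T' ∧ pm k ∈ T' := by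
  -- the negative twin of any location is never a positive twin
  have hppm : ∀ a k : Fin w, pm a ≠ pp k := by
    intro a k h
    rcases eq_or_ne a k with rfl | hak
    · have h0 : dist (pp a) (pm a) = 0 := by rw [h, dist_self]
      rw [htwin a] at h0; linarith
    · have h0 : dist (pm a) (pp k) = 0 := by rw [h, dist_self]
      rw [(hcross a k hak).2.2.1] at h0
      have := hd1 a k hak; linarith
  have hγ2 : γ / 2 ≤ 1 := le_of_lt hγ1
  -- if one twin at a location is in T', so is the other
  have hboth : ∀ b : Fin w, (pp b ∈ T' ∨ pm b ∈ T') → pp b ∈ T' ∧ pm b ∈ T' := by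
    intro b hb
    rcases hb with hpb | hmb
    · refine ⟨hpb, ?_⟩
      by_contra hmb
      have hmin : ∀ r ∈ T', dist (pm b) (pp b) ≤ dist (pm b) r := by
        intro r hr
        have hdd : dist (pm b) (pp b) = γ / 2 := by rw [dist_comm, htwin b]
        rw [hdd]
        rcases hsub hr with ⟨k, rfl⟩ | ⟨k, rfl⟩
        · rcases eq_or_ne b k with rfl | hbk
          · rw [dist_comm, htwin b]
          · rw [(hcross b k hbk).2.2.1]; linarith [hd1 b k hbk]
        · rcases eq_or_ne b k with rfl | hbk
          · exact absurd hr hmb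
          · rw [(hcross b k hbk).2.2.2]; linarith [hd1 b k hbk]
      have h := hcons (pm b) (Or.inr ⟨b, rfl⟩) (pp b) hpb hmin
      obtain ⟨k, hk⟩ := h.mpr ⟨b, rfl⟩
      exact hppm b k hk.symm
    · refine ⟨?_, hmb⟩
      by_contra hpb
      have hmin : ∀ r ∈ T', dist (pp b) (pm b) ≤ dist (pp b) r := by
        intro r hr
        rw [htwin b]
        rcases hsub hr with ⟨k, rfl⟩ | ⟨k, rfl⟩
        · rcases eq_or_ne b k with rfl | hbk
          · exact absurd hr hpb
          · rw [(hcross b k hbk).1]; linarith [hd1 b k hbk]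
        · rcases eq_or_ne b k with rfl | hbk
          · rw [htwin b]
          · rw [(hcross b k hbk).2.1]; linarith [hd1 b k hbk]
      have h := hcons (pp b) (Or.inl ⟨b, rfl⟩) (pm b) hmb hmin
      obtain ⟨k, hk⟩ := h.mp ⟨b, rfl⟩
      exact hppm b k hk.symm
  -- propagation along an edge of the location graph
  have step : ∀ a b : Fin w, a ≠ b → d a b = 1 → pp a ∈ T' → pm a ∈ T' →
      pp b ∈ T' ∧ pm b ∈ T' := by
    intro a b hab hd hpa hma
    apply hboth
    by_contra h
    push_neg at h
    obtain ⟨h1, h2⟩ := h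
    have hdist : dist (pp b) (pm a) = 1 := by
      rw [dist_comm, (hcross a b hab).2.2.1, hd]
    have hmin : ∀ r ∈ T', dist (pp b) (pm a) ≤ dist (pp b) r := by
      intro r hr
      rw [hdist]
      rcases hsub hr with ⟨k, rfl⟩ | ⟨k, rfl⟩
      · rcases eq_or_ne b k with rfl | hbk
        · exact absurd hr h1
        · rw [(hcross b k hbk).1]; exact hd1 b k hbk
      · rcases eq_or_ne b k with rfl | hbk
        · exact absurd hr h2
        · rw [(hcross b k hbk).2.1]; exact hd1 b k hbk
    have h := hcons (pp b) (Or.inl ⟨b, rfl⟩) (pm a) hma hmin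
    obtain ⟨k, hk⟩ := h.mp ⟨b, rfl⟩
    exact hppm a k hk.symm
  intro k
  induction hconn j k with
  | refl => exact ⟨hjp, hjm⟩
  | tail _ hbc ih => exact step _ _ hbc.1 hbc.2 ih.1 ih.2
end

section
/- A γ-net of a labeled set S with margin exactly γ, where S has doubling dimension d and diam(S) = 1, can fail to be improvable in general, but its size bound ⌈1/γ⌉^{d+1} is tight up to the exponent constant: there exist metric spaces S of doubling dimension O(D) with margin γ in which every consistent subset has size at least (1/γ)^{Ω(D)}. -/
open Metric Finset

namespace Stmt19

/-- The grid point: `D` grid coordinates spaced by `γ`, plus a twin coordinate `t`. -/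
noncomputable def pt (D N : ℕ) (γ : ℝ) (v : Fin D → Fin N) (t : ℝ) : (Fin D → ℝ) × ℝ :=
  (fun i => γ * ((v i : ℕ) : ℝ), t)

lemma one_le_abs_natCast {a b : ℕ} (h : a ≠ b) : (1:ℝ) ≤ |(a:ℝ) - b| := by
  have h' : ((a:ℤ) - b) ≠ 0 := by
    simpa using fun h' => h (by exact_mod_cast sub_eq_zero.mp h')
  calc (1:ℝ) ≤ |((a:ℤ) - b : ℤ)| := by exact_mod_cast Int.one_le_abs h'
    _ = |(a:ℝ) - b| := by push_cast; ring_nf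

lemma dist_pt (D N : ℕ) (γ : ℝ) (v w : Fin D → Fin N) (t u : ℝ) :
    dist (pt D N γ v t) (pt D N γ w u) =
      max (dist (fun i => γ * ((v i : ℕ) : ℝ)) (fun i => γ * ((w i : ℕ) : ℝ))) |t - u| := by
  rw [Prod.dist_eq]
  simp [pt, Real.dist_eq]

lemma grid_ge {D N : ℕ} {γ : ℝ} (hγ : 0 < γ) {v w : Fin D → Fin N} (h : v ≠ w) :
    γ ≤ dist (fun i => γ * ((v i : ℕ) : ℝ)) (fun i => γ * ((w i : ℕ) : ℝ)) := by
  obtain ⟨i, hi⟩ := Function.ne_iff.mp h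
  refine le_trans ?_ (dist_le_pi_dist _ _ i)
  rw [Real.dist_eq]
  have h1 : (1:ℝ) ≤ |((v i : ℕ):ℝ) - ((w i : ℕ):ℝ)| :=
    one_le_abs_natCast (fun hh => hi (Fin.val_injective hh))
  calc γ = γ * 1 := by ring
    _ ≤ γ * |((v i : ℕ):ℝ) - ((w i : ℕ):ℝ)| := by
        exact mul_le_mul_of_nonneg_left h1 hγ.le
    _ = |γ * ((v i : ℕ):ℝ) - γ * ((w i : ℕ):ℝ)| := by
        rw [← mul_sub, abs_mul, abs_of_pos hγ]

lemma dist_pt_ge {D N : ℕ} {γ : ℝ} (hγ : 0 < γ) {v w : Fin D → Fin N} (h : v ≠ w)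
    (t u : ℝ) : γ ≤ dist (pt D N γ v t) (pt D N γ w u) := by
  rw [dist_pt]
  exact le_trans (grid_ge hγ h) (le_max_left _ _)

lemma dist_pt_of_ne {D N : ℕ} {γ : ℝ} (hγ : 0 < γ) {v w : Fin D → Fin N} (h : v ≠ w)
    {t u : ℝ} (ht : |t - u| ≤ γ) :
    dist (pt D N γ v t) (pt D N γ w u) =
      dist (fun i => γ * ((v i : ℕ) : ℝ)) (fun i => γ * ((w i : ℕ) : ℝ)) := by
  rw [dist_pt]
  exact max_eq_left (le_trans ht (grid_ge hγ h))

lemma dist_pt_twin {D N : ℕ} {γ : ℝ} (hγ : 0 < γ) (v : Fin D → Fin N) :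
    dist (pt D N γ v 0) (pt D N γ v γ) = γ := by
  rw [dist_pt]
  simp [abs_of_pos hγ, dist_self, max_eq_right hγ.le]

lemma dist_pt_le_one {D N : ℕ} {γ : ℝ} (hγ : 0 < γ) (hN : 1 ≤ N) (hNγ : γ * N ≤ 1)
    (v w : Fin D → Fin N) {t u : ℝ} (htu : |t - u| ≤ γ) :
    dist (pt D N γ v t) (pt D N γ w u) ≤ 1 := by
  have hγ1 : γ ≤ 1 := by
    calc γ = γ * 1 := by ring
      _ ≤ γ * N := mul_le_mul_of_nonneg_left (by exact_mod_cast hN) hγ.le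
      _ ≤ 1 := hNγ
  rw [dist_pt, max_le_iff]
  constructor
  · rw [dist_pi_le_iff zero_le_one]
    intro i
    rw [Real.dist_eq, ← mul_sub, abs_mul, abs_of_pos hγ]
    have hb : |((v i : ℕ):ℝ) - ((w i : ℕ):ℝ)| ≤ N := by
      rw [abs_le]
      have h1 : ((v i : ℕ):ℝ) < N := by exact_mod_cast (v i).isLt
      have h2 : ((w i : ℕ):ℝ) < N := by exact_mod_cast (w i).isLt
      have h3 : (0:ℝ) ≤ ((v i : ℕ):ℝ) := by positivity
      have h4 : (0:ℝ) ≤ ((w i : ℕ):ℝ) := by positivity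
      constructor <;> linarith
    calc γ * |((v i : ℕ):ℝ) - ((w i : ℕ):ℝ)| ≤ γ * N :=
          mul_le_mul_of_nonneg_left hb hγ.le
      _ ≤ 1 := hNγ
  · exact le_trans htu hγ1

lemma abs_le_half {u v r : ℝ} (h : |u - v| ≤ r) :
    |u - (v + (if v ≤ u then r/2 else -(r/2)))| ≤ r/2 := by
  rw [abs_le] at h ⊢
  obtain ⟨h1, h2⟩ := h
  split_ifs with hc
  · constructor <;> linarith
  · push_neg at hc
    constructor <;> linarith

lemma doubling {D : ℕ} (hD : 1 ≤ D) (x : (Fin D → ℝ) × ℝ) (r : ℝ) :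
    ∃ F : Finset ((Fin D → ℝ) × ℝ), F.card ≤ 2 ^ (2 * D) ∧
      closedBall x r ⊆ ⋃ y ∈ F, closedBall y (r / 2) := by
  classical
  rcases lt_or_ge r 0 with hr | hr
  · exact ⟨∅, by simp, by rw [closedBall_eq_empty.mpr hr]; simp⟩
  · set ctr : (Fin D → Bool) × Bool → (Fin D → ℝ) × ℝ := fun εb =>
      ((fun i => x.1 i + (if εb.1 i then r/2 else -(r/2))),
        x.2 + (if εb.2 then r/2 else -(r/2))) with hctr
    refine ⟨Finset.univ.image ctr, ?_, ?_⟩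
    · calc (Finset.univ.image ctr).card ≤ (Finset.univ : Finset ((Fin D → Bool) × Bool)).card :=
          Finset.card_image_le
        _ = 2 ^ D * 2 := by simp [Finset.card_univ]
        _ ≤ 2 ^ (2 * D) := by
            rw [show 2 ^ D * 2 = 2 ^ (D + 1) by ring]
            exact Nat.pow_le_pow_right (by norm_num) (by omega)
    · intro y hy
      have hy' : dist y x ≤ r := mem_closedBall.mp hy
      have h1 : dist y.1 x.1 ≤ r := le_trans (by rw [Prod.dist_eq]; exact le_max_left _ _) hy'
      have h2 : dist y.2 x.2 ≤ r := le_trans (by rw [Prod.dist_eq]; exact le_max_right _ _) hy'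
      refine Set.mem_biUnion (Finset.mem_image_of_mem ctr
        (Finset.mem_univ ((fun i => decide (x.1 i ≤ y.1 i)), decide (x.2 ≤ y.2)))) ?_
      rw [mem_closedBall, Prod.dist_eq, max_le_iff]
      constructor
      · rw [dist_pi_le_iff (by linarith)]
        intro i
        have hcoord : dist (y.1 i) (x.1 i) ≤ r := le_trans (dist_le_pi_dist _ _ i) h1
        rw [Real.dist_eq] at hcoord
        simp only [hctr, Real.dist_eq, decide_eq_true_eq]
        exact abs_le_half hcoord
      · rw [Real.dist_eq] at h2
        simp only [hctr, Real.dist_eq, decide_eq_true_eq]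
        exact abs_le_half h2

end Stmt19

set_option maxHeartbeats 1000000 in
/-- Tightness of the net-size bound: there are constants `c > 0`, `C` and `γ₀ > 0` such
that for every dimension `D ≥ 1` and every margin `0 < γ < γ₀` there is a labeled metric
space of doubling dimension at most `C·D`, diameter at most `1` and margin `≥ γ`, in
which every consistent subset has at least `(1/γ)^(c·D)` points. -/
theorem stmt_19 :
    ∃ c : ℝ, 0 < c ∧ ∃ C : ℕ, ∃ γ₀ : ℝ, 0 < γ₀ ∧
      ∀ D : ℕ, 1 ≤ D → ∀ γ : ℝ, 0 < γ → γ < γ₀ →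
        ∃ (X : Type) (_ : MetricSpace X) (_ : DecidableEq X) (Sp Sm : Finset X),
          Disjoint Sp Sm ∧ (Sp ∪ Sm).Nonempty ∧
          Metric.diam ((Sp ∪ Sm : Finset X) : Set X) ≤ 1 ∧
          (∀ x ∈ Sp, ∀ y ∈ Sm, γ ≤ dist x y) ∧
          (∀ (x : X) (r : ℝ), ∃ F : Finset X, F.card ≤ 2 ^ (C * D) ∧
            Metric.closedBall x r ⊆ ⋃ y ∈ F, Metric.closedBall y (r / 2)) ∧
          ∀ T ⊆ Sp ∪ Sm, T.Nonempty →
            (∀ p ∈ Sp ∪ Sm, ∀ q ∈ T, (∀ r ∈ T, dist p q ≤ dist p r) →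
              (p ∈ Sp ↔ q ∈ Sp)) →
            (1 / γ) ^ (c * D) ≤ (T.card : ℝ) := by
  refine ⟨1/2, by norm_num, 2, 1/4, by norm_num, ?_⟩
  intro D hD γ hγ hγ4
  set N : ℕ := ⌊1/γ⌋₊ with hNdef
  have hinv : (4:ℝ) ≤ 1/γ := by
    rw [le_div_iff₀ hγ]; linarith
  have hN4 : 4 ≤ N := Nat.le_floor (by exact_mod_cast hinv)
  have hN1 : 1 ≤ N := by omega
  have hNγ : γ * N ≤ 1 := by
    have : (N:ℝ) ≤ 1/γ := Nat.floor_le (by positivity)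
    calc γ * N ≤ γ * (1/γ) := mul_le_mul_of_nonneg_left this hγ.le
      _ = 1 := by field_simp
  have hPinj : ∀ t : ℝ, Function.Injective (fun v => Stmt19.pt D N γ v t) := by
    intro t v w h
    funext i
    have h1 : γ * ((v i : ℕ):ℝ) = γ * ((w i : ℕ):ℝ) := congrFun (congrArg Prod.fst h) i
    have h2 : ((v i : ℕ):ℝ) = ((w i : ℕ):ℝ) := mul_left_cancel₀ hγ.ne' h1
    exact Fin.val_injective (by exact_mod_cast h2)
  set Sp : Finset ((Fin D → ℝ) × ℝ) := Finset.univ.image (fun v => Stmt19.pt D N γ v 0) with hSp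
  set Sm : Finset ((Fin D → ℝ) × ℝ) := Finset.univ.image (fun v => Stmt19.pt D N γ v γ) with hSm
  have hmemSp : ∀ v, Stmt19.pt D N γ v 0 ∈ Sp := fun v => Finset.mem_image_of_mem _ (Finset.mem_univ v)
  have hmemSm : ∀ v, Stmt19.pt D N γ v γ ∈ Sm := fun v => Finset.mem_image_of_mem _ (Finset.mem_univ v)
  have hsnd : ∀ v t, (Stmt19.pt D N γ v t).2 = t := fun v t => rfl
  have hSp2 : ∀ x ∈ Sp, x.2 = 0 := by
    intro x hx
    obtain ⟨v, -, rfl⟩ := Finset.mem_image.mp hx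
    rfl
  have hSm2 : ∀ x ∈ Sm, x.2 = γ := by
    intro x hx
    obtain ⟨v, -, rfl⟩ := Finset.mem_image.mp hx
    rfl
  have hdisj : Disjoint Sp Sm := by
    rw [Finset.disjoint_left]
    intro x hxp hxm
    have h0 := hSp2 x hxp
    have hg := hSm2 x hxm
    rw [h0] at hg
    exact hγ.ne' hg.symm
  have hPmγ : ∀ v, Stmt19.pt D N γ v γ ∉ Sp := fun v h => hγ.ne (by rw [← hSp2 _ h]; rfl)
  have hPm0 : ∀ v, Stmt19.pt D N γ v 0 ∉ Sm := fun v h => hγ.ne (by rw [← hSm2 _ h]; rfl)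
  -- description of elements of the union
  have hmemU : ∀ x ∈ Sp ∪ Sm, ∃ v t, (t = 0 ∨ t = γ) ∧ x = Stmt19.pt D N γ v t := by
    intro x hx
    rcases Finset.mem_union.mp hx with h | h
    · obtain ⟨v, -, rfl⟩ := Finset.mem_image.mp h
      exact ⟨v, 0, Or.inl rfl, rfl⟩
    · obtain ⟨v, -, rfl⟩ := Finset.mem_image.mp h
      exact ⟨v, γ, Or.inr rfl, rfl⟩
  have habs : ∀ t u : ℝ, (t = 0 ∨ t = γ) → (u = 0 ∨ u = γ) → |t - u| ≤ γ := by
    intro t u ht hu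
    rcases ht with rfl | rfl <;> rcases hu with rfl | rfl <;>
      simp [abs_of_nonneg hγ.le, abs_of_nonpos (neg_nonpos.mpr hγ.le)] <;> linarith
  refine ⟨(Fin D → ℝ) × ℝ, inferInstance, inferInstance, Sp, Sm, hdisj, ?_, ?_, ?_, ?_, ?_⟩
  · -- nonempty
    have : (Finset.univ : Finset (Fin D → Fin N)).Nonempty :=
      ⟨fun _ => ⟨0, by omega⟩, Finset.mem_univ _⟩
    exact Finset.Nonempty.mono (Finset.subset_union_left)
      (this.image (fun v => Stmt19.pt D N γ v 0))
  · -- diameter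
    apply Metric.diam_le_of_forall_dist_le zero_le_one
    intro x hx y hy
    obtain ⟨v, t, ht, rfl⟩ := hmemU x hx
    obtain ⟨w, u, hu, rfl⟩ := hmemU y hy
    exact Stmt19.dist_pt_le_one hγ hN1 hNγ v w (habs t u ht hu)
  · -- margin
    intro x hx y hy
    obtain ⟨v, -, rfl⟩ := Finset.mem_image.mp hx
    obtain ⟨w, -, rfl⟩ := Finset.mem_image.mp hy
    rw [Stmt19.dist_pt]
    refine le_trans ?_ (le_max_right _ _)
    rw [show (0:ℝ) - γ = -γ by ring, abs_neg, abs_of_pos hγ]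
  · -- doubling
    intro x r
    obtain ⟨F, hF1, hF2⟩ := Stmt19.doubling hD x r
    exact ⟨F, hF1, hF2⟩
  · -- lower bound on consistent subsets
    intro T hTsub hTne hcons
    -- every point of the space belongs to T
    have keyB : ∀ v : Fin D → Fin N, Stmt19.pt D N γ v 0 ∈ T ∨ Stmt19.pt D N γ v γ ∈ T := by
      intro v
      by_contra hcon
      push_neg at hcon
      obtain ⟨h0, h1⟩ := hcon
      obtain ⟨q, hqT, hqmin⟩ := T.exists_min_image (fun r => dist (Stmt19.pt D N γ v 0) r) hTne
      obtain ⟨w, u, hu, rfl⟩ := hmemU q (hTsub hqT)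
      have hwv : w ≠ v := by
        rintro rfl
        rcases hu with rfl | rfl
        · exact h0 hqT
        · exact h1 hqT
      -- distances from the two twins to any point of T agree
      have heq : ∀ r ∈ T, dist (Stmt19.pt D N γ v γ) r = dist (Stmt19.pt D N γ v 0) r := by
        intro r hr
        obtain ⟨w', u', hu', rfl⟩ := hmemU r (hTsub hr)
        have hw'v : w' ≠ v := by
          rintro rfl
          rcases hu' with rfl | rfl
          · exact h0 hr
          · exact h1 hr
        rw [Stmt19.dist_pt_of_ne hγ (Ne.symm hw'v) (habs γ u' (Or.inr rfl) hu'),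
          Stmt19.dist_pt_of_ne hγ (Ne.symm hw'v) (habs 0 u' (Or.inl rfl) hu')]
      have hc0 : Stmt19.pt D N γ v 0 ∈ Sp ↔ Stmt19.pt D N γ w u ∈ Sp :=
        hcons (Stmt19.pt D N γ v 0) (Finset.mem_union_left _ (hmemSp v)) (Stmt19.pt D N γ w u) hqT hqmin
      have hc1 : Stmt19.pt D N γ v γ ∈ Sp ↔ Stmt19.pt D N γ w u ∈ Sp := by
        refine hcons (Stmt19.pt D N γ v γ) (Finset.mem_union_right _ (hmemSm v)) (Stmt19.pt D N γ w u) hqT ?_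
        intro r hr
        rw [heq (Stmt19.pt D N γ w u) hqT, heq r hr]
        exact hqmin r hr
      exact hPmγ v (hc1.mpr (hc0.mp (hmemSp v)))
    have keyA0 : ∀ v : Fin D → Fin N, Stmt19.pt D N γ v γ ∈ T → Stmt19.pt D N γ v 0 ∈ T := by
      intro v hvT
      by_contra h0
      have hnear : ∀ r ∈ T, dist (Stmt19.pt D N γ v 0) (Stmt19.pt D N γ v γ) ≤ dist (Stmt19.pt D N γ v 0) r := by
        intro r hr
        obtain ⟨w, u, hu, rfl⟩ := hmemU r (hTsub hr)
        rw [Stmt19.dist_pt_twin hγ]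
        by_cases hwv : w = v
        · subst hwv
          rcases hu with rfl | rfl
          · exact absurd hr h0
          · exact le_of_eq (Stmt19.dist_pt_twin hγ _).symm
        · exact Stmt19.dist_pt_ge hγ (Ne.symm hwv) 0 u
      have hc := hcons (Stmt19.pt D N γ v 0) (Finset.mem_union_left _ (hmemSp v)) (Stmt19.pt D N γ v γ) hvT hnear
      exact hPmγ v (hc.mp (hmemSp v))
    have keyA1 : ∀ v : Fin D → Fin N, Stmt19.pt D N γ v 0 ∈ T → Stmt19.pt D N γ v γ ∈ T := by
      intro v hvT
      by_contra h1
      have hdist : dist (Stmt19.pt D N γ v γ) (Stmt19.pt D N γ v 0) = γ := by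
        rw [dist_comm]; exact Stmt19.dist_pt_twin hγ v
      have hnear : ∀ r ∈ T, dist (Stmt19.pt D N γ v γ) (Stmt19.pt D N γ v 0) ≤ dist (Stmt19.pt D N γ v γ) r := by
        intro r hr
        obtain ⟨w, u, hu, rfl⟩ := hmemU r (hTsub hr)
        rw [hdist]
        by_cases hwv : w = v
        · subst hwv
          rcases hu with rfl | rfl
          · exact le_of_eq hdist.symm
          · exact absurd hr h1
        · exact Stmt19.dist_pt_ge hγ (Ne.symm hwv) γ u
      have hc := hcons (Stmt19.pt D N γ v γ) (Finset.mem_union_right _ (hmemSm v)) (Stmt19.pt D N γ v 0) hvT hnear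
      exact hPmγ v (hc.mpr (hmemSp v))
    have hSpT : Sp ⊆ T := by
      intro x hx
      obtain ⟨v, -, rfl⟩ := Finset.mem_image.mp hx
      rcases keyB v with h | h
      · exact h
      · exact keyA0 v h
    -- cardinality count
    have hcard : N ^ D ≤ T.card := by
      calc N ^ D = Sp.card := by
            rw [hSp, Finset.card_image_of_injective _ (hPinj 0), Finset.card_univ]
            simp
        _ ≤ T.card := Finset.card_le_card hSpT
    -- the analytic estimate
    have hbase : (1/γ) ^ ((1:ℝ)/2) ≤ (N:ℝ) := by
      rw [← Real.sqrt_eq_rpow]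
      have h1 : Real.sqrt (1/γ) ≤ 1/γ - 1 := by
        rw [show 1/γ - 1 = Real.sqrt ((1/γ - 1)^2) by rw [Real.sqrt_sq (by linarith)]]
        exact Real.sqrt_le_sqrt (by nlinarith)
      have h2 : 1/γ - 1 < N := Nat.sub_one_lt_floor (1/γ)
      linarith
    have hb0 : (0:ℝ) ≤ (1/γ) ^ ((1:ℝ)/2) := Real.rpow_nonneg (by positivity) _
    calc (1/γ) ^ ((1/2 : ℝ) * D) = ((1/γ) ^ ((1:ℝ)/2)) ^ (D:ℕ) := by
          rw [Real.rpow_mul (by positivity), Real.rpow_natCast]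
      _ ≤ (N:ℝ) ^ (D:ℕ) := pow_le_pow_left₀ hb0 hbase D
      _ = ((N ^ D : ℕ) : ℝ) := by push_cast; ring
      _ ≤ (T.card : ℝ) := by exact_mod_cast hcard
end
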